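/- arXiv:1904.07211 — 3 statements merged into one kernel-verified Lean document; each statement's English description precedes it below -/
import Mathlib

section
/- Let C ∈ ℂ^{n×n} be sectorial with W(C) contained in the open right half-plane (Re z > 0 for all z ∈ W(C)), and partition C = [[C₁₁, C₁₂],[C₂₁, C₂₂]] with C₁₁ ∈ ℂ^{k×k}. Then C₁₁ is invertible and the Schur complement C₂₂ − C₂₁C₁₁⁻¹C₁₂ is also sectorial with numerical range in the open right half-plane. -/
/-!
Restricting the quadratic form of `fromBlocks A B C D` to vectors `(x, 0)` shows that `A` is
strictly accretive, hence injective, hence invertible. Evaluating it instead at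
`(-A⁻¹ B y, y)`, the vector on which the first block row vanishes, gives exactly the quadratic
form of the Schur complement `D - C A⁻¹ B` at `y`.
-/

open Matrix

namespace Matrix

section BlockQuadraticForm

variable {R l n : Type*} [Fintype l] [Fintype n] [Semiring R] [Star R]

theorem star_sumElim_dotProduct_fromBlocks_mulVec (A : Matrix l l R) (B : Matrix l n R)
    (C : Matrix n l R) (D : Matrix n n R) (x : l → R) (y : n → R) :
    star (Sum.elim x y) ⬝ᵥ fromBlocks A B C D *ᵥ Sum.elim x y =
      star x ⬝ᵥ (A *ᵥ x + B *ᵥ y) + star y ⬝ᵥ (C *ᵥ x + D *ᵥ y) := by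
  rw [Function.star_sumElim, fromBlocks_mulVec, sumElim_dotProduct_sumElim, Sum.elim_comp_inl,
    Sum.elim_comp_inr]

end BlockQuadraticForm

section Accretive

variable {𝕜 l n : Type*} [RCLike 𝕜] [Fintype l] [Fintype n]

/-- The numerical range `W(M)` lies in the open right half-plane. -/
def IsStrictlyAccretive (M : Matrix n n 𝕜) : Prop :=
  ∀ x : n → 𝕜, x ≠ 0 → 0 < RCLike.re (star x ⬝ᵥ M *ᵥ x)

theorem IsStrictlyAccretive.isUnit [DecidableEq n] {M : Matrix n n 𝕜}
    (hM : M.IsStrictlyAccretive) : IsUnit M := by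
  rw [← mulVec_injective_iff_isUnit]
  refine (injective_iff_map_eq_zero M.mulVecLin).2 fun x hx => ?_
  by_contra hx0
  have hMx : M *ᵥ x = 0 := hx
  simpa [hMx] using hM x hx0

theorem IsStrictlyAccretive.of_fromBlocks₁₁ {A : Matrix l l 𝕜} {B : Matrix l n 𝕜}
    {C : Matrix n l 𝕜} {D : Matrix n n 𝕜} (h : (fromBlocks A B C D).IsStrictlyAccretive) :
    A.IsStrictlyAccretive := by
  intro x hx
  have hx0 : Sum.elim x (0 : n → 𝕜) ≠ 0 := fun h0 =>
    hx (by simpa using congrArg (· ∘ Sum.inl) h0)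
  simpa [star_sumElim_dotProduct_fromBlocks_mulVec] using h _ hx0

theorem star_sumElim_dotProduct_fromBlocks_mulVec_schur [DecidableEq l] {A : Matrix l l 𝕜}
    (hA : IsUnit A) (B : Matrix l n 𝕜) (C : Matrix n l 𝕜) (D : Matrix n n 𝕜) (y : n → 𝕜) :
    star (Sum.elim (-(A⁻¹ * B) *ᵥ y) y) ⬝ᵥ
        fromBlocks A B C D *ᵥ Sum.elim (-(A⁻¹ * B) *ᵥ y) y =
      star y ⬝ᵥ (D - C * A⁻¹ * B) *ᵥ y := by
  have hrow₁ : A *ᵥ (-(A⁻¹ * B) *ᵥ y) + B *ᵥ y = 0 := by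
    rw [mulVec_mulVec, Matrix.mul_neg, ← Matrix.mul_assoc,
      mul_nonsing_inv _ (A.isUnit_iff_isUnit_det.mp hA), Matrix.one_mul, neg_mulVec,
      neg_add_cancel]
  have hrow₂ : C *ᵥ (-(A⁻¹ * B) *ᵥ y) + D *ᵥ y = (D - C * A⁻¹ * B) *ᵥ y := by
    rw [mulVec_mulVec, ← add_mulVec, Matrix.mul_neg, ← Matrix.mul_assoc, neg_add_eq_sub]
  rw [star_sumElim_dotProduct_fromBlocks_mulVec, hrow₁, hrow₂, dotProduct_zero, zero_add]

theorem IsStrictlyAccretive.schurComplement₁₁ [DecidableEq l] {A : Matrix l l 𝕜}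
    {B : Matrix l n 𝕜} {C : Matrix n l 𝕜} {D : Matrix n n 𝕜}
    (h : (fromBlocks A B C D).IsStrictlyAccretive) :
    (D - C * A⁻¹ * B).IsStrictlyAccretive := by
  intro y hy
  have hxy : Sum.elim (-(A⁻¹ * B) *ᵥ y) y ≠ 0 := fun h0 =>
    hy (by simpa using congrArg (· ∘ Sum.inr) h0)
  rw [← star_sumElim_dotProduct_fromBlocks_mulVec_schur h.of_fromBlocks₁₁.isUnit]
  exact h _ hxy

end Accretive

end Matrix

/-- The Schur complement of the top-left block of a sectorial matrix with numerical range
in the open right half-plane is again sectorial with numerical range in the open right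
half-plane. -/
theorem schur_complement_sectorial {k m : ℕ}
    (A : Matrix (Fin k) (Fin k) ℂ) (B : Matrix (Fin k) (Fin m) ℂ)
    (B' : Matrix (Fin m) (Fin k) ℂ) (E : Matrix (Fin m) (Fin m) ℂ)
    (hsec : ∀ x : Fin k ⊕ Fin m → ℂ, x ≠ 0 →
      0 < (star x ⬝ᵥ (Matrix.fromBlocks A B B' E) *ᵥ x).re) :
    IsUnit A ∧ ∀ y : Fin m → ℂ, y ≠ 0 →
      0 < (star y ⬝ᵥ (E - B' * A⁻¹ * B) *ᵥ y).re := by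
  have hC : (fromBlocks A B B' E).IsStrictlyAccretive := hsec
  exact ⟨hC.of_fromBlocks₁₁.isUnit, hC.schurComplement₁₁⟩
end

section
/- Let A, B ∈ ℂ^{n×n} with Re(x*Ax) > 0 and Re(x*Bx) > 0 for all nonzero x ∈ ℂⁿ. Then every eigenvalue λ of AB satisfies λ ∈ W'(A)·W'(B), where W'(M) = {x*Mx : x ≠ 0} is the angular numerical range; in particular, λ is a product of an element of W'(A) and an element of W'(B). -/
open Matrix

/-!
If `(A * B) v = μ v` and `c = v* B v`, then `(B v)* A (B v) = μ (B v)* v = μ c̄`, and rescaling `v`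
by `1 / |c|` turns `c` into `c / |c|² = c̄⁻¹`, so the product of the two values is `μ`.
Strict accretivity of `B` makes `c ≠ 0`, hence also `v ≠ 0` and `B v ≠ 0`.
-/

section QuadraticForm

variable {ι α : Type*} [Fintype ι] [CommSemiring α] [StarRing α]

lemma star_smul_dotProduct_mulVec_smul (M : Matrix ι ι α) (t : α) (v : ι → α) :
    star (t • v) ⬝ᵥ M *ᵥ (t • v) = star t * t * (star v ⬝ᵥ M *ᵥ v) := by
  rw [mulVec_smul, dotProduct_smul, star_smul, smul_dotProduct, smul_eq_mul, smul_eq_mul]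
  ring

lemma star_mulVec_dotProduct_mulVec_mulVec_of_mul_mulVec_eq_smul {A B : Matrix ι ι α}
    {v : ι → α} {μ : α} (h : (A * B) *ᵥ v = μ • v) :
    star (B *ᵥ v) ⬝ᵥ A *ᵥ (B *ᵥ v) = μ * star (star v ⬝ᵥ B *ᵥ v) := by
  rw [mulVec_mulVec, h, dotProduct_smul, star_dotProduct, smul_eq_mul]

end QuadraticForm

lemma exists_eq_mul_of_mul_mulVec_eq_smul {ι : Type*} [Fintype ι] {A B : Matrix ι ι ℂ}
    {v : ι → ℂ} {μ : ℂ} (h : (A * B) *ᵥ v = μ • v) (hc : star v ⬝ᵥ B *ᵥ v ≠ 0) :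
    ∃ x : ι → ℂ, x ≠ 0 ∧ ∃ y : ι → ℂ, y ≠ 0 ∧
      μ = (star x ⬝ᵥ A *ᵥ x) * (star y ⬝ᵥ B *ᵥ y) := by
  set c := star v ⬝ᵥ B *ᵥ v
  have hBv : B *ᵥ v ≠ 0 := fun h0 => hc (by simp [c, h0])
  have hv : v ≠ 0 := fun h0 => hc (by simp [c, h0])
  have hnorm : (‖c‖ : ℂ) ≠ 0 := by exact_mod_cast norm_ne_zero_iff.mpr hc
  refine ⟨B *ᵥ v, hBv, (‖c‖⁻¹ : ℂ) • v, smul_ne_zero (inv_ne_zero hnorm) hv, ?_⟩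
  rw [star_mulVec_dotProduct_mulVec_mulVec_of_mul_mulVec_eq_smul h,
    star_smul_dotProduct_mulVec_smul]
  have hconj : star c * c = (‖c‖ : ℂ) ^ 2 := by
    rw [Complex.star_def, mul_comm, Complex.mul_conj, Complex.normSq_eq_norm_sq]
    push_cast; rfl
  have hstar : star ((‖c‖ : ℂ)⁻¹) = (‖c‖ : ℂ)⁻¹ := by
    rw [star_inv₀, Complex.star_def, Complex.conj_ofReal]
  rw [hstar]
  field_simp
  linear_combination (-μ) * hconj

theorem eigenvalue_mem_angular_range_product_general {n : ℕ}
    (A B : Matrix (Fin n) (Fin n) ℂ)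
    (hB : ∀ x : Fin n → ℂ, x ≠ 0 → 0 < (star x ⬝ᵥ B *ᵥ x).re) :
    ∀ μ : ℂ, (∃ v : Fin n → ℂ, v ≠ 0 ∧ (A * B) *ᵥ v = μ • v) →
      ∃ x : Fin n → ℂ, x ≠ 0 ∧ ∃ y : Fin n → ℂ, y ≠ 0 ∧
        μ = (star x ⬝ᵥ A *ᵥ x) * (star y ⬝ᵥ B *ᵥ y) := by
  rintro μ ⟨v, hv, h⟩
  exact exists_eq_mul_of_mul_mulVec_eq_smul h fun hc => by simpa [hc] using hB v hv

/-- Every eigenvalue of the product of two strictly accretive matrices is a product of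
an element of the angular numerical range of `A` and one of `B`. -/
theorem eigenvalue_mem_angular_range_product {n : ℕ}
    (A B : Matrix (Fin n) (Fin n) ℂ)
    (hA : ∀ x : Fin n → ℂ, x ≠ 0 → 0 < (star x ⬝ᵥ A *ᵥ x).re)
    (hB : ∀ x : Fin n → ℂ, x ≠ 0 → 0 < (star x ⬝ᵥ B *ᵥ x).re) :
    ∀ μ : ℂ, (∃ v : Fin n → ℂ, v ≠ 0 ∧ (A * B) *ᵥ v = μ • v) →
      ∃ x : Fin n → ℂ, x ≠ 0 ∧ ∃ y : Fin n → ℂ, y ≠ 0 ∧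
        μ = (star x ⬝ᵥ A *ᵥ x) * (star y ⬝ᵥ B *ᵥ y) :=
  eigenvalue_mem_angular_range_product_general A B hB
end

section
/- Let A, B ∈ ℂ^{n×n} be such that W'(A) and W'(B) are each contained in a sector {z ≠ 0 : arg z ∈ [αᵢ, βᵢ]} with (β₁ + β₂) − (α₁ + α₂) < π. Then the Hadamard product A ⊙ B satisfies: for every nonzero x ∈ ℂⁿ, x*(A ⊙ B)x ≠ 0 and arg(x*(A ⊙ B)x) ∈ [α₁ + α₂, β₁ + β₂]. In particular A ⊙ B is sectorial. -/
/-!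
With `D = diagonal x` one has `x*(A ⊙ B)x = tr (D* A D Bᵀ)`. After restricting to the support
of `x`, `C = D* A D` is invertible, and if `C Bᵀ v = μ v` with `v = C u ≠ 0`, then
`v* Bᵀ v = μ · conj (u* C u)`, so `μ` lies in the sector `[α₁ + α₂, β₁ + β₂]`. A sector of opening
less than `π` is closed under addition, so the trace, the sum of the eigenvalues, lies in it too.
-/

open Matrix Complex ComplexConjugate

namespace Complex

def sector (a b : ℝ) : Set ℂ :=
  {z | ∃ r θ : ℝ, 0 < r ∧ θ ∈ Set.Icc a b ∧ z = r * exp (θ * I)}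

variable {a b c d : ℝ} {z w : ℂ}

theorem ne_zero_of_mem_sector (hz : z ∈ sector a b) : z ≠ 0 := by
  obtain ⟨r, θ, hr, -, rfl⟩ := hz
  exact mul_ne_zero (ofReal_ne_zero.2 hr.ne') (exp_ne_zero _)

theorem le_of_mem_sector (hz : z ∈ sector a b) : a ≤ b := by
  obtain ⟨r, θ, -, hθ, -⟩ := hz
  exact hθ.1.trans hθ.2

theorem mem_sector_of_arg (hz : z ≠ 0) (h : z.arg ∈ Set.Icc a b) : z ∈ sector a b :=
  ⟨‖z‖, z.arg, norm_pos_iff.2 hz, h, (norm_mul_exp_arg_mul_I z).symm⟩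

theorem exp_mem_sector (t : ℝ) : exp (t * I) ∈ sector t t :=
  ⟨1, t, one_pos, Set.left_mem_Icc.2 le_rfl, by simp⟩

theorem mul_mem_sector (hz : z ∈ sector a b) (hw : w ∈ sector c d) :
    z * w ∈ sector (a + c) (b + d) := by
  obtain ⟨r, θ, hr, hθ, rfl⟩ := hz
  obtain ⟨s, ψ, hs, hψ, rfl⟩ := hw
  refine ⟨r * s, θ + ψ, mul_pos hr hs, ⟨add_le_add hθ.1 hψ.1, add_le_add hθ.2 hψ.2⟩, ?_⟩
  push_cast
  rw [add_mul, exp_add]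
  ring

theorem inv_conj_mem_sector (hz : z ∈ sector a b) : (conj z)⁻¹ ∈ sector a b := by
  obtain ⟨r, θ, hr, hθ, rfl⟩ := hz
  refine ⟨r⁻¹, θ, inv_pos.2 hr, hθ, ?_⟩
  rw [map_mul, ← exp_conj, map_mul, conj_ofReal, conj_ofReal, conj_I, mul_inv, ← exp_neg]
  push_cast
  ring_nf

theorem mem_sector_neg_self_iff (hc₀ : 0 ≤ c) (hcπ : c ≤ Real.pi) :
    z ∈ sector (-c) c ↔ z ≠ 0 ∧ ‖z‖ * Real.cos c ≤ z.re := by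
  constructor
  · intro hz
    refine ⟨ne_zero_of_mem_sector hz, ?_⟩
    obtain ⟨r, θ, hr, hθ, rfl⟩ := hz
    have hcos : Real.cos c ≤ Real.cos θ := by
      rw [← Real.cos_abs θ]
      exact Real.cos_le_cos_of_nonneg_of_le_pi (abs_nonneg θ) hcπ (abs_le.2 hθ)
    rw [norm_mul, norm_exp_ofReal_mul_I, norm_real, Real.norm_of_nonneg hr.le, mul_one,
      re_ofReal_mul, exp_ofReal_mul_I_re]
    exact mul_le_mul_of_nonneg_left hcos hr.le
  · rintro ⟨hz, hre⟩
    refine mem_sector_of_arg hz (abs_le.1 ?_)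
    have hnorm : 0 < ‖z‖ := norm_pos_iff.2 hz
    have hcos : Real.cos c ≤ Real.cos |z.arg| := by
      rw [Real.cos_abs, cos_arg hz, le_div_iff₀ hnorm]
      linarith
    exact Real.strictAntiOn_cos.le_iff_ge ⟨hc₀, hcπ⟩ ⟨abs_nonneg _, abs_arg_le_pi z⟩ |>.1 hcos

theorem add_mem_sector_neg_self (hc : c < Real.pi / 2) (hz : z ∈ sector (-c) c)
    (hw : w ∈ sector (-c) c) : z + w ∈ sector (-c) c := by
  have hc₀ : 0 ≤ c := by linarith [le_of_mem_sector hz]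
  have hcπ : c ≤ Real.pi := by linarith [Real.pi_pos]
  have hcos : 0 < Real.cos c := Real.cos_pos_of_mem_Ioo ⟨by linarith, hc⟩
  rw [mem_sector_neg_self_iff hc₀ hcπ] at hz hw ⊢
  have hzw : ‖z + w‖ * Real.cos c ≤ (‖z‖ + ‖w‖) * Real.cos c :=
    mul_le_mul_of_nonneg_right (norm_add_le z w) hcos.le
  have hz₀ : 0 < ‖z‖ := norm_pos_iff.2 hz.1
  refine ⟨fun h => ?_, by rw [add_re]; linarith⟩
  have : 0 < (z + w).re := by rw [add_re]; nlinarith [norm_nonneg w]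
  simp [h] at this

theorem add_mem_sector (h : b - a < Real.pi) (hz : z ∈ sector a b) (hw : w ∈ sector a b) :
    z + w ∈ sector a b := by
  have rotate (u) (hu : u ∈ sector a b) :
      exp (↑(-((a + b) / 2)) * I) * u ∈ sector (-((b - a) / 2)) ((b - a) / 2) := by
    convert mul_mem_sector (exp_mem_sector _) hu using 2 <;> ring
  have hsum := mul_mem_sector (exp_mem_sector ((a + b) / 2))
    (add_mem_sector_neg_self (by linarith) (rotate z hz) (rotate w hw))
  rwa [← mul_add, ← mul_assoc, ← exp_add, ofReal_neg, neg_mul, add_neg_cancel, exp_zero,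
    one_mul, show (a + b) / 2 + -((b - a) / 2) = a by ring,
    show (a + b) / 2 + (b - a) / 2 = b by ring] at hsum

theorem multiset_sum_mem_sector (h : b - a < Real.pi) {s : Multiset ℂ} (hs : s ≠ 0)
    (hmem : ∀ z ∈ s, z ∈ sector a b) : s.sum ∈ sector a b :=
  Multiset.sum_induction_nonempty _ (fun _ _ => add_mem_sector h) hs hmem

end Complex

namespace Matrix

variable {m n R : Type*} [Fintype m] [Fintype n]

section CommSemiring

variable [CommSemiring R] [StarRing R]

def angularNumericalRange (M : Matrix m m R) : Set R :=
  {z | ∃ x, x ≠ 0 ∧ star x ⬝ᵥ M *ᵥ x = z}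

theorem star_dotProduct_conjTranspose_mul_mul_mulVec (D : Matrix n m R) (M : Matrix n n R)
    (y : m → R) : star y ⬝ᵥ (Dᴴ * M * D) *ᵥ y = star (D *ᵥ y) ⬝ᵥ M *ᵥ D *ᵥ y := by
  rw [star_mulVec, ← dotProduct_mulVec, mulVec_mulVec, mulVec_mulVec, Matrix.mul_assoc]

theorem angularNumericalRange_conjTranspose_mul_mul_subset {D : Matrix n m R}
    (hD : Function.Injective D.mulVec) (M : Matrix n n R) :
    (Dᴴ * M * D).angularNumericalRange ⊆ M.angularNumericalRange := by
  rintro _ ⟨y, hy, rfl⟩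
  refine ⟨D *ᵥ y, fun h => hy (hD ?_), ?_⟩
  · rw [h, mulVec_zero]
  · exact (star_dotProduct_conjTranspose_mul_mul_mulVec D M y).symm

theorem star_dotProduct_transpose_mulVec (M : Matrix m m R) (y : m → R) :
    star y ⬝ᵥ Mᵀ *ᵥ y = star (star y) ⬝ᵥ M *ᵥ star y := by
  rw [mulVec_transpose, star_star, dotProduct_comm, dotProduct_mulVec]

theorem angularNumericalRange_transpose_subset (M : Matrix m m R) :
    Mᵀ.angularNumericalRange ⊆ M.angularNumericalRange := by
  rintro _ ⟨y, hy, rfl⟩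
  exact ⟨star y, star_ne_zero.2 hy, (star_dotProduct_transpose_mulVec M y).symm⟩

theorem star_dotProduct_submatrix_mulVec {e : m → n} (he : Function.Injective e)
    (M : Matrix n n R) {x : n → R} (hx : ∀ i ∉ Set.range e, x i = 0) :
    star (x ∘ e) ⬝ᵥ M.submatrix e e *ᵥ (x ∘ e) = star x ⬝ᵥ M *ᵥ x := by
  simp only [dotProduct, mulVec, Pi.star_apply, Function.comp_apply, submatrix_apply]
  refine Fintype.sum_of_injective e he _ _ (fun i hi => by simp [hx i hi]) fun i => ?_
  congr 1
  exact Fintype.sum_of_injective e he _ _ (fun j hj => by simp [hx j hj]) fun j => rfl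

theorem angularNumericalRange_submatrix_subset {e : m → n} (he : Function.Injective e)
    (M : Matrix n n R) : (M.submatrix e e).angularNumericalRange ⊆ M.angularNumericalRange := by
  classical
  rintro _ ⟨y, hy, rfl⟩
  refine ⟨Function.extend e y 0, fun h => hy ?_, ?_⟩
  · ext i
    simpa [he.extend_apply] using congrFun h (e i)
  · rw [← star_dotProduct_submatrix_mulVec he M (x := Function.extend e y 0)
      fun i hi => Function.extend_apply' _ _ _ (by simpa using hi)]
    simp [Function.comp_def, he.extend_apply]

end CommSemiring

theorem exists_mulVec_eq_smul_of_mem_roots_charpoly [DecidableEq m] {K : Type*} [Field K]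
    {M : Matrix m m K} {μ : K} (hμ : μ ∈ M.charpoly.roots) : ∃ v ≠ 0, M *ᵥ v = μ • v := by
  have hdet : (scalar m μ - M).det = 0 := by
    rw [← eval_charpoly]
    exact Polynomial.isRoot_of_mem_roots hμ
  obtain ⟨v, hv, hMv⟩ := exists_mulVec_eq_zero_iff.2 hdet
  refine ⟨v, hv, ?_⟩
  rwa [sub_mulVec, sub_eq_zero, scalar_apply, ← smul_one_eq_diagonal, smul_mulVec, one_mulVec,
    eq_comm] at hMv

variable {C E : Matrix m m ℂ} {a₁ b₁ a₂ b₂ : ℝ}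

theorem angularNumericalRange_subset_sector_of_arg {M : Matrix m m ℂ} {a b : ℝ}
    (h : ∀ x, x ≠ 0 → star x ⬝ᵥ M *ᵥ x ≠ 0 ∧ (star x ⬝ᵥ M *ᵥ x).arg ∈ Set.Icc a b) :
    M.angularNumericalRange ⊆ sector a b := by
  rintro _ ⟨x, hx, rfl⟩
  exact mem_sector_of_arg (h x hx).1 (h x hx).2

theorem isUnit_of_angularNumericalRange_subset_sector [DecidableEq m]
    (hC : C.angularNumericalRange ⊆ sector a₁ b₁) : IsUnit C := by
  rw [isUnit_iff_isUnit_det, isUnit_iff_ne_zero]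
  intro hdet
  obtain ⟨v, hv, hCv⟩ := exists_mulVec_eq_zero_iff.2 hdet
  exact ne_zero_of_mem_sector (hC ⟨v, hv, rfl⟩) (by rw [hCv, dotProduct_zero])

theorem eigenvalue_mul_mem_sector [DecidableEq m] (hC : C.angularNumericalRange ⊆ sector a₁ b₁)
    (hE : E.angularNumericalRange ⊆ sector a₂ b₂) {μ : ℂ} {v : m → ℂ} (hv : v ≠ 0)
    (hμ : (C * E) *ᵥ v = μ • v) : μ ∈ sector (a₁ + a₂) (b₁ + b₂) := by
  have hCunit := isUnit_of_angularNumericalRange_subset_sector hC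
  obtain ⟨u, rfl⟩ := mulVec_surjective_iff_isUnit.2 hCunit v
  have hu : u ≠ 0 := by rintro rfl; exact hv (mulVec_zero C)
  have hEv : E *ᵥ C *ᵥ u = μ • u :=
    mulVec_injective_iff_isUnit.2 hCunit <| by rwa [mulVec_mulVec, mulVec_smul]
  have hq : star (C *ᵥ u) ⬝ᵥ E *ᵥ C *ᵥ u = μ * conj (star u ⬝ᵥ C *ᵥ u) := by
    rw [hEv, dotProduct_smul, smul_eq_mul, star_dotProduct]
    rfl
  have hqC := hC ⟨u, hu, rfl⟩
  have hconj : conj (star u ⬝ᵥ C *ᵥ u) ≠ 0 := (map_ne_zero _).2 (ne_zero_of_mem_sector hqC)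
  have hμ' : μ = (conj (star u ⬝ᵥ C *ᵥ u))⁻¹ * (star (C *ᵥ u) ⬝ᵥ E *ᵥ C *ᵥ u) := by
    rw [hq, mul_comm μ, ← mul_assoc, inv_mul_cancel₀ hconj, one_mul]
  rw [hμ']
  exact mul_mem_sector (inv_conj_mem_sector hqC) (hE ⟨_, hv, rfl⟩)

theorem trace_mul_mem_sector [DecidableEq m] [Nonempty m]
    (hC : C.angularNumericalRange ⊆ sector a₁ b₁) (hE : E.angularNumericalRange ⊆ sector a₂ b₂)
    (h : b₁ + b₂ - (a₁ + a₂) < Real.pi) : (C * E).trace ∈ sector (a₁ + a₂) (b₁ + b₂) := by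
  rw [trace_eq_sum_roots_charpoly]
  refine multiset_sum_mem_sector h (fun h0 => ?_) fun μ hμ => ?_
  · have := congrArg Multiset.card h0
    rw [IsAlgClosed.card_roots_eq_natDegree, charpoly_natDegree_eq_dim] at this
    exact Fintype.card_ne_zero this
  · obtain ⟨v, hv, hμv⟩ := exists_mulVec_eq_smul_of_mem_roots_charpoly hμ
    exact eigenvalue_mul_mem_sector hC hE hv hμv

theorem star_dotProduct_hadamard_mulVec [DecidableEq m] (A B : Matrix m m ℂ) (x : m → ℂ) :
    star x ⬝ᵥ (A ⊙ B) *ᵥ x = ((diagonal x)ᴴ * A * diagonal x * Bᵀ).trace := by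
  rw [dotProduct_mulVec, dotProduct_vecMul_hadamard, diagonal_conjTranspose, transpose_mul,
    diagonal_transpose, Matrix.mul_assoc _ (diagonal x)]

theorem angularNumericalRange_hadamard_subset_sector [DecidableEq m] {A B : Matrix m m ℂ}
    (hA : A.angularNumericalRange ⊆ sector a₁ b₁) (hB : B.angularNumericalRange ⊆ sector a₂ b₂)
    (h : b₁ + b₂ - (a₁ + a₂) < Real.pi) :
    (A ⊙ B).angularNumericalRange ⊆ sector (a₁ + a₂) (b₁ + b₂) := by
  rintro _ ⟨x, hx, rfl⟩
  obtain ⟨i, hi⟩ := Function.ne_iff.1 hx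
  have : Nonempty {i // x i ≠ 0} := ⟨⟨i, hi⟩⟩
  let e : {i // x i ≠ 0} → m := Subtype.val
  have he : Function.Injective e := Subtype.val_injective
  have hD : Function.Injective (diagonal (x ∘ e)).mulVec :=
    mulVec_injective_iff_isUnit.2 <| isUnit_diagonal.2 <| Pi.isUnit_iff.2 fun j => Ne.isUnit j.2
  rw [← star_dotProduct_submatrix_mulVec he _ fun j hj => by simpa [e] using hj,
    submatrix_hadamard, star_dotProduct_hadamard_mulVec]
  exact trace_mul_mem_sector
    ((angularNumericalRange_conjTranspose_mul_mul_subset hD _).trans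
      ((angularNumericalRange_submatrix_subset he A).trans hA))
    ((angularNumericalRange_transpose_subset _).trans
      ((angularNumericalRange_submatrix_subset he B).trans hB)) h

end Matrix

/-- Sector preservation for the Hadamard product: if the angular numerical ranges of `A`
and `B` lie in sectors `[α₁, β₁]` and `[α₂, β₂]` with total opening less than `π`, then
the angular numerical range of `A ⊙ B` lies in the sector `[α₁ + α₂, β₁ + β₂]`;
in particular `A ⊙ B` is sectorial. -/
theorem hadamard_sector {n : ℕ} (A B : Matrix (Fin n) (Fin n) ℂ) (α₁ β₁ α₂ β₂ : ℝ)
    (hαβ : (β₁ + β₂) - (α₁ + α₂) < Real.pi)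
    (hA : ∀ x : Fin n → ℂ, x ≠ 0 →
      star x ⬝ᵥ A *ᵥ x ≠ 0 ∧ (star x ⬝ᵥ A *ᵥ x).arg ∈ Set.Icc α₁ β₁)
    (hB : ∀ x : Fin n → ℂ, x ≠ 0 →
      star x ⬝ᵥ B *ᵥ x ≠ 0 ∧ (star x ⬝ᵥ B *ᵥ x).arg ∈ Set.Icc α₂ β₂) :
    ∀ x : Fin n → ℂ, x ≠ 0 →
      star x ⬝ᵥ (A ⊙ B) *ᵥ x ≠ 0 ∧
      ∃ r θ : ℝ, 0 < r ∧ θ ∈ Set.Icc (α₁ + α₂) (β₁ + β₂) ∧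
        star x ⬝ᵥ (A ⊙ B) *ᵥ x = (r : ℂ) * Complex.exp (θ * Complex.I) := by
  intro x hx
  have hAB := angularNumericalRange_hadamard_subset_sector
    (angularNumericalRange_subset_sector_of_arg hA)
    (angularNumericalRange_subset_sector_of_arg hB) hαβ ⟨x, hx, rfl⟩
  exact ⟨ne_zero_of_mem_sector hAB, hAB⟩
end
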